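/- Let f : 𝔻 → ℝ be a C² function on the unit disc, and fix 0 < r < 1. Then ∫₀¹ f(r e^{2πiθ}) dθ - f(0) = (1/2π) ∫_{|ζ|<r} log(r/|ζ|) · Δf(ζ) dA(ζ), where Δ is the Euclidean Laplacian and dA is Lebesgue area measure on ℂ. -/

import Mathlib

/-!
Write `A g ρ` for the mean of `g` over the circle `|z| = ρ`, and `∂_ρ`, `∂_τ` for the derivatives in
the directions `e^{iθ}`, `i e^{iθ}`. The Laplacian can be computed in any orthonormal frame, so
`Δf = ∂²_ρ f + ∂²_τ f`; and `ρ ∂²_τ f - ∂_ρ f` at `ρ e^{iθ}` is the `θ`-derivative of the periodic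
function `∂_τ f (ρ e^{iθ})`, so it has mean zero. Hence `ρ A(Δf)(ρ) = (ρ A(f)'(ρ))'`, and
`H ρ = ρ log(r/ρ) A(f)'(ρ) + A(f)(ρ)` is a primitive of `ρ log(r/ρ) A(Δf)(ρ)` on `(0, r)`,
continuous on `[0, r]` with `H 0 = f 0` and `H r = A(f)(r)`. Polar coordinates turn the area
integral into `2π ∫₀ʳ ρ log(r/ρ) A(Δf)(ρ) dρ`.
-/

open Real MeasureTheory

/-- The Euclidean Laplacian of `f : ℂ → ℝ`: `Δf = f_xx + f_yy`, expressed via the second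
iterated Fréchet derivative. -/
noncomputable def lapl (f : ℂ → ℝ) (z : ℂ) : ℝ :=
  iteratedFDeriv ℝ 2 f z ![1, 1] + iteratedFDeriv ℝ 2 f z ![Complex.I, Complex.I]

open Set Filter Topology Metric Complex

lemma mul_log_div_eq {r : ℝ} (hr : r ≠ 0) (x : ℝ) :
    x * Real.log (r / x) = x * Real.log r - x * Real.log x := by
  rcases eq_or_ne x 0 with rfl | hx
  · simp
  · rw [Real.log_div hr hx]; ring

lemma continuous_mul_log_div (r : ℝ) : Continuous fun x : ℝ ↦ x * Real.log (r / x) := by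
  rcases eq_or_ne r 0 with rfl | hr
  · simp [continuous_const]
  · simp_rw [mul_log_div_eq hr]
    exact (continuous_id.mul continuous_const).sub Real.continuous_mul_log

lemma hasDerivAt_mul_log_div {r x : ℝ} (hr : r ≠ 0) (hx : x ≠ 0) :
    HasDerivAt (fun x ↦ x * Real.log (r / x)) (Real.log (r / x) - 1) x := by
  simp_rw [mul_log_div_eq hr]
  refine (((hasDerivAt_id x).mul_const (Real.log r)).sub
    (Real.hasDerivAt_mul_log hx)).congr_deriv ?_
  rw [Real.log_div hr hx]
  ring

theorem hasDerivAt_intervalIntegral_of_continuousOn {E : Type*} [NormedAddCommGroup E]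
    [NormedSpace ℝ E] {F F' : ℝ → ℝ → E} {s : Set ℝ} {x₀ a b : ℝ}
    (hs : IsCompact s) (hx₀ : s ∈ 𝓝 x₀)
    (hF : ∀ x ∈ s, ContinuousOn (F x) (uIcc a b))
    (hF' : ContinuousOn (Function.uncurry F') (s ×ˢ uIcc a b))
    (hderiv : ∀ x ∈ s, ∀ t ∈ uIcc a b, HasDerivAt (F · t) (F' x t) x) :
    HasDerivAt (fun x ↦ ∫ t in a..b, F x t) (∫ t in a..b, F' x₀ t) x₀ := by
  obtain ⟨C, hC⟩ := (hs.prod isCompact_uIcc).exists_bound_of_continuousOn hF'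
  have hx₀s : x₀ ∈ s := mem_of_mem_nhds hx₀
  refine (intervalIntegral.hasDerivAt_integral_of_dominated_loc_of_deriv_le (bound := fun _ ↦ C)
    hx₀ ?_ ((hF x₀ hx₀s).intervalIntegrable) ?_ ?_ intervalIntegrable_const ?_).2
  · filter_upwards [hx₀] with x hx
    exact ((hF x hx).mono uIoc_subset_uIcc).aestronglyMeasurable measurableSet_uIoc
  · have : ContinuousOn (F' x₀) (uIcc a b) :=
      hF'.comp (continuousOn_const.prodMk continuousOn_id) fun t ht ↦ ⟨hx₀s, ht⟩
    exact (this.mono uIoc_subset_uIcc).aestronglyMeasurable measurableSet_uIoc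
  · exact .of_forall fun t ht x hx ↦ hC (x, t) ⟨hx, uIoc_subset_uIcc ht⟩
  · exact .of_forall fun t ht x hx ↦ hderiv x hx t (uIoc_subset_uIcc ht)

lemma hasDerivAt_circleMap_zero_radius (ρ θ : ℝ) :
    HasDerivAt (fun ρ ↦ circleMap 0 ρ θ) (circleMap 0 1 θ) ρ := by
  simp only [circleMap_zero]
  simpa using (hasDerivAt_id ρ).ofReal_comp.mul_const (exp (θ * I))

lemma circleMap_zero_eq_smul (ρ θ : ℝ) : circleMap 0 ρ θ = ρ • circleMap 0 1 θ := by
  simp [circleMap_zero, Complex.real_smul]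

lemma circleMap_mem_ball {R ρ : ℝ} (hρ : ρ ∈ ball (0 : ℝ) R) (θ : ℝ) :
    circleMap 0 ρ θ ∈ ball (0 : ℂ) R := by
  simpa [norm_circleMap_zero] using hρ

lemma circleAverage_eq_integral_exp {E : Type*} [NormedAddCommGroup E] [NormedSpace ℝ E]
    (f : ℂ → E) (c : ℂ) (R : ℝ) :
    circleAverage f c R = ∫ t in (0 : ℝ)..1, f (c + R * exp (2 * π * I * t)) := by
  have h := intervalIntegral.integral_comp_mul_left (fun θ ↦ f (circleMap c R θ))
    (a := 0) (b := 1) (c := 2 * π) (by positivity)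
  rw [mul_zero, mul_one] at h
  rw [circleAverage_def, ← h]
  congr with t
  simp only [circleMap]
  push_cast
  ring_nf

lemma circleAverage_comp_norm_mul (φ : ℝ → ℝ) (g : ℂ → ℝ) (ρ : ℝ) :
    circleAverage (fun z ↦ φ ‖z‖ * g z) 0 ρ = φ |ρ| * circleAverage g 0 ρ := by
  simp only [circleAverage_def, norm_circleMap_zero, intervalIntegral.integral_const_mul,
    smul_eq_mul]
  ring

lemma polarCoord_symm_eq_circleMap (p : ℝ × ℝ) :
    Complex.polarCoord.symm p = circleMap 0 p.1 p.2 := by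
  rw [Complex.polarCoord_symm_apply, circleMap_zero, exp_mul_I, ← ofReal_cos, ← ofReal_sin]

theorem integral_ball_eq_integral_smul_circleAverage {E : Type*} [NormedAddCommGroup E]
    [NormedSpace ℝ E] [CompleteSpace E] {G : ℂ → E} {r : ℝ} (hr : 0 ≤ r)
    (hG : ContinuousOn (fun p : ℝ × ℝ ↦ p.1 • G (circleMap 0 p.1 p.2)) (Icc 0 r ×ˢ Icc (-π) π)) :
    ∫ ζ in ball (0 : ℂ) r, G ζ = (2 * π) • ∫ ρ in 0..r, ρ • circleAverage G 0 ρ := by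
  have hpolar : ∫ ζ in ball (0 : ℂ) r, G ζ =
      ∫ p in Ioo 0 r ×ˢ Ioo (-π) π, p.1 • G (circleMap 0 p.1 p.2) := by
    rw [← integral_indicator measurableSet_ball, ← Complex.integral_comp_polarCoord_symm,
      ← integral_indicator (measurableSet_Ioo.prod measurableSet_Ioo),
      ← integral_indicator polarCoord.open_target.measurableSet]
    congr 1 with p
    simp only [indicator, polarCoord_target, polarCoord_symm_eq_circleMap, mem_prod,
      mem_Ioi, mem_Ioo, mem_ball_zero_iff, norm_circleMap_zero]
    split_ifs <;> simp_all [abs_of_pos]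
  have hint : IntegrableOn (fun p : ℝ × ℝ ↦ p.1 • G (circleMap 0 p.1 p.2))
      (Ioo 0 r ×ˢ Ioo (-π) π) (volume.prod volume) :=
    (hG.integrableOn_compact (isCompact_Icc.prod isCompact_Icc)).mono_set
      (prod_mono Ioo_subset_Icc_self Ioo_subset_Icc_self)
  have hcircle : ∀ ρ,
      ∫ θ in Ioo (-π) π, G (circleMap 0 ρ θ) = (2 * π) • circleAverage G 0 ρ := by
    intro ρ
    rw [← integral_Ioc_eq_integral_Ioo, ← intervalIntegral.integral_of_le (by linarith [pi_pos]),
      circleAverage_def, smul_inv_smul₀ (by positivity)]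
    simpa [show -π + 2 * π = π by ring] using
      (periodic_circleMap 0 ρ).comp G |>.intervalIntegral_add_eq (-π) 0
  rw [hpolar, Measure.volume_eq_prod, setIntegral_prod _ hint, intervalIntegral.integral_of_le hr,
    integral_Ioc_eq_integral_Ioo, ← integral_smul]
  refine setIntegral_congr_fun measurableSet_Ioo fun ρ _ ↦ ?_
  rw [integral_smul, hcircle, smul_comm]

open InnerProductSpace in
lemma lapl_eq_fderiv_fderiv_rotation (f : ℂ → ℝ) (z : ℂ) (a : Circle) :
    lapl f z = fderiv ℝ (fderiv ℝ f) z a a + fderiv ℝ (fderiv ℝ f) z (a * I) (a * I) := by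
  have h := congrFun (laplacian_eq_iteratedFDeriv_orthonormalBasis f
    (orthonormalBasisOneI.map (rotation a))) z
  rw [laplacian_eq_iteratedFDeriv_complexPlane] at h
  simpa [lapl, iteratedFDeriv_two_apply] using h

noncomputable def circleAverageRadialDeriv (f : ℂ → ℝ) (ρ : ℝ) : ℝ :=
  (2 * π)⁻¹ * ∫ θ in 0..2 * π, fderiv ℝ f (circleMap 0 ρ θ) (circleMap 0 1 θ)

noncomputable def circleAverageSecondRadialDeriv (f : ℂ → ℝ) (ρ : ℝ) : ℝ :=
  (2 * π)⁻¹ * ∫ θ in 0..2 * π,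
    fderiv ℝ (fderiv ℝ f) (circleMap 0 ρ θ) (circleMap 0 1 θ) (circleMap 0 1 θ)

section ContDiffOnBall

variable {f : ℂ → ℝ} {R : ℝ} (hf : ContDiffOn ℝ 2 f (ball 0 R))
include hf

lemma continuousOn_fderiv_ball : ContinuousOn (fderiv ℝ f) (ball 0 R) :=
  hf.continuousOn_fderiv_of_isOpen isOpen_ball (by norm_num)

lemma continuousOn_fderiv_fderiv_ball : ContinuousOn (fderiv ℝ (fderiv ℝ f)) (ball 0 R) :=
  (hf.fderiv_of_isOpen isOpen_ball (m := 1) (by norm_num)).continuousOn_fderiv_of_isOpen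
    isOpen_ball le_rfl

lemma hasFDerivAt_of_mem_ball {z : ℂ} (hz : z ∈ ball 0 R) : HasFDerivAt f (fderiv ℝ f z) z :=
  (hf.differentiableOn (by norm_num) |>.differentiableAt (isOpen_ball.mem_nhds hz)).hasFDerivAt

lemma hasFDerivAt_fderiv_of_mem_ball {z : ℂ} (hz : z ∈ ball 0 R) :
    HasFDerivAt (fderiv ℝ f) (fderiv ℝ (fderiv ℝ f) z) z :=
  ((hf.fderiv_of_isOpen isOpen_ball (m := 1) (by norm_num)).differentiableOn one_ne_zero
    |>.differentiableAt (isOpen_ball.mem_nhds hz)).hasFDerivAt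

lemma continuousOn_lapl_ball : ContinuousOn (lapl f) (ball 0 R) := by
  have h := continuousOn_fderiv_fderiv_ball hf
  rw [show lapl f = fun z ↦ fderiv ℝ (fderiv ℝ f) z 1 1 + fderiv ℝ (fderiv ℝ f) z I I from
    funext fun z ↦ by simpa using lapl_eq_fderiv_fderiv_rotation f z 1]
  exact ((h.clm_apply continuousOn_const).clm_apply continuousOn_const).add
    ((h.clm_apply continuousOn_const).clm_apply continuousOn_const)

lemma continuous_fderiv_circleMap {ρ : ℝ} (hρ : ρ ∈ ball (0 : ℝ) R) {v : ℝ → ℂ}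
    (hv : Continuous v) : Continuous fun θ ↦ fderiv ℝ f (circleMap 0 ρ θ) (v θ) :=
  ((continuousOn_fderiv_ball hf).comp_continuous (continuous_circleMap 0 ρ)
    (circleMap_mem_ball hρ)).clm_apply hv

lemma continuous_fderiv_fderiv_circleMap {ρ : ℝ} (hρ : ρ ∈ ball (0 : ℝ) R) {v w : ℝ → ℂ}
    (hv : Continuous v) (hw : Continuous w) :
    Continuous fun θ ↦ fderiv ℝ (fderiv ℝ f) (circleMap 0 ρ θ) (v θ) (w θ) :=
  (((continuousOn_fderiv_fderiv_ball hf).comp_continuous (continuous_circleMap 0 ρ)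
    (circleMap_mem_ball hρ)).clm_apply hv).clm_apply hw

lemma hasDerivAt_circleAverage_radius {ρ : ℝ} (hρ : ρ ∈ ball (0 : ℝ) R) :
    HasDerivAt (circleAverage f 0) (circleAverageRadialDeriv f ρ) ρ := by
  obtain ⟨s, hs, hsR, hsc⟩ := local_compact_nhds (isOpen_ball.mem_nhds hρ)
  have hmem : ∀ x ∈ s, ∀ θ, circleMap 0 x θ ∈ ball (0 : ℂ) R :=
    fun x hx ↦ circleMap_mem_ball (hsR hx)
  refine (hasDerivAt_intervalIntegral_of_continuousOn (F := fun x θ ↦ f (circleMap 0 x θ))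
    (F' := fun x θ ↦ fderiv ℝ f (circleMap 0 x θ) (circleMap 0 1 θ)) hsc hs ?_ ?_ ?_).const_mul
    (2 * π)⁻¹
  · exact fun x hx ↦
      (hf.continuousOn.comp_continuous (continuous_circleMap 0 x) (hmem x hx)).continuousOn
  · exact ((continuousOn_fderiv_ball hf).comp circleMap.continuous.continuousOn
      fun p hp ↦ hmem p.1 hp.1 p.2).clm_apply (by fun_prop)
  · exact fun x hx θ _ ↦ (hasFDerivAt_of_mem_ball hf (hmem x hx θ)).comp_hasDerivAt x
      (hasDerivAt_circleMap_zero_radius x θ)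

lemma hasDerivAt_circleAverageRadialDeriv {ρ : ℝ} (hρ : ρ ∈ ball (0 : ℝ) R) :
    HasDerivAt (circleAverageRadialDeriv f) (circleAverageSecondRadialDeriv f ρ) ρ := by
  obtain ⟨s, hs, hsR, hsc⟩ := local_compact_nhds (isOpen_ball.mem_nhds hρ)
  have hmem : ∀ x ∈ s, ∀ θ, circleMap 0 x θ ∈ ball (0 : ℂ) R :=
    fun x hx ↦ circleMap_mem_ball (hsR hx)
  refine (hasDerivAt_intervalIntegral_of_continuousOn
    (F := fun x θ ↦ fderiv ℝ f (circleMap 0 x θ) (circleMap 0 1 θ))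
    (F' := fun x θ ↦ fderiv ℝ (fderiv ℝ f) (circleMap 0 x θ) (circleMap 0 1 θ) (circleMap 0 1 θ))
    hsc hs ?_ ?_ ?_).const_mul (2 * π)⁻¹
  · exact fun x hx ↦
      (continuous_fderiv_circleMap hf (hsR hx) (continuous_circleMap 0 1)).continuousOn
  · exact (((continuousOn_fderiv_fderiv_ball hf).comp circleMap.continuous.continuousOn
      fun p hp ↦ hmem p.1 hp.1 p.2).clm_apply (by fun_prop)).clm_apply (by fun_prop)
  · intro x hx θ _
    have h : HasDerivAt (fun x ↦ fderiv ℝ f (circleMap 0 x θ))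
        (fderiv ℝ (fderiv ℝ f) (circleMap 0 x θ) (circleMap 0 1 θ)) x :=
      (hasFDerivAt_fderiv_of_mem_ball hf (hmem x hx θ)).comp_hasDerivAt x
        (hasDerivAt_circleMap_zero_radius x θ)
    simpa using h.clm_apply (hasDerivAt_const x (circleMap 0 1 θ))

lemma integral_mul_fderiv_fderiv_circleMap_tangent {ρ : ℝ} (hρ : ρ ∈ ball (0 : ℝ) R) :
    ∫ θ in 0..2 * π, ρ * fderiv ℝ (fderiv ℝ f) (circleMap 0 ρ θ)
      (circleMap 0 1 θ * I) (circleMap 0 1 θ * I) =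
    ∫ θ in 0..2 * π, fderiv ℝ f (circleMap 0 ρ θ) (circleMap 0 1 θ) := by
  have hderiv : ∀ θ, HasDerivAt (fun θ ↦ fderiv ℝ f (circleMap 0 ρ θ) (circleMap 0 1 θ * I))
      (ρ * fderiv ℝ (fderiv ℝ f) (circleMap 0 ρ θ) (circleMap 0 1 θ * I) (circleMap 0 1 θ * I) -
        fderiv ℝ f (circleMap 0 ρ θ) (circleMap 0 1 θ)) θ := by
    intro θ
    have h : HasDerivAt (fun θ ↦ fderiv ℝ f (circleMap 0 ρ θ))
        (fderiv ℝ (fderiv ℝ f) (circleMap 0 ρ θ) (circleMap 0 ρ θ * I)) θ :=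
      (hasFDerivAt_fderiv_of_mem_ball hf (circleMap_mem_ball hρ θ)).comp_hasDerivAt θ
        (hasDerivAt_circleMap 0 ρ θ)
    refine (h.clm_apply ((hasDerivAt_circleMap 0 1 θ).mul_const I)).congr_deriv ?_
    rw [circleMap_zero_eq_smul ρ θ, smul_mul_assoc, mul_assoc, I_mul_I, mul_neg_one]
    simp only [map_smul, map_neg, smul_apply, smul_eq_mul]
    ring
  have hcont := (continuous_fderiv_fderiv_circleMap hf hρ (v := fun θ ↦ circleMap 0 1 θ * I)
    (w := fun θ ↦ circleMap 0 1 θ * I) (by fun_prop) (by fun_prop)).const_mul ρ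
  have hcont' := continuous_fderiv_circleMap hf hρ (continuous_circleMap 0 1)
  have hzero := intervalIntegral.integral_eq_sub_of_hasDerivAt (fun θ _ ↦ hderiv θ)
    ((hcont.sub hcont').intervalIntegrable 0 (2 * π))
  rw [intervalIntegral.integral_sub (hcont.intervalIntegrable _ _)
    (hcont'.intervalIntegrable _ _), (periodic_circleMap 0 ρ).eq,
    (periodic_circleMap 0 1).eq, sub_self] at hzero
  exact sub_eq_zero.1 hzero

lemma mul_circleAverage_lapl {ρ : ℝ} (hρ : ρ ∈ ball (0 : ℝ) R) :
    ρ * circleAverage (lapl f) 0 ρ =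
      circleAverageRadialDeriv f ρ + ρ * circleAverageSecondRadialDeriv f ρ := by
  have hlapl : ∀ θ, lapl f (circleMap 0 ρ θ) =
      fderiv ℝ (fderiv ℝ f) (circleMap 0 ρ θ) (circleMap 0 1 θ) (circleMap 0 1 θ) +
      fderiv ℝ (fderiv ℝ f) (circleMap 0 ρ θ) (circleMap 0 1 θ * I) (circleMap 0 1 θ * I) := by
    intro θ
    simpa [circleMap_zero] using lapl_eq_fderiv_fderiv_rotation f (circleMap 0 ρ θ) (Circle.exp θ)
  have hcont₁ := continuous_fderiv_fderiv_circleMap hf hρ (continuous_circleMap 0 1)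
    (continuous_circleMap 0 1)
  have hcont₂ := continuous_fderiv_fderiv_circleMap hf hρ (v := fun θ ↦ circleMap 0 1 θ * I)
    (w := fun θ ↦ circleMap 0 1 θ * I) (by fun_prop) (by fun_prop)
  rw [circleAverage_def, smul_eq_mul, intervalIntegral.integral_congr fun θ _ ↦ hlapl θ,
    intervalIntegral.integral_add (hcont₁.intervalIntegrable _ _) (hcont₂.intervalIntegrable _ _),
    circleAverageRadialDeriv, circleAverageSecondRadialDeriv,
    ← integral_mul_fderiv_fderiv_circleMap_tangent hf hρ, intervalIntegral.integral_const_mul]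
  ring

theorem integral_mul_log_mul_circleAverage_lapl {r : ℝ} (hr : 0 ≤ r) (hrR : r < R) :
    ∫ ρ in 0..r, ρ * Real.log (r / ρ) * circleAverage (lapl f) 0 ρ =
      circleAverage f 0 r - f 0 := by
  have hball : Icc 0 r ⊆ ball (0 : ℝ) R := fun x hx ↦ by
    simpa [abs_of_nonneg hx.1] using hx.2.trans_lt hrR
  have hH : ContinuousOn (fun ρ ↦ ρ * Real.log (r / ρ) * circleAverageRadialDeriv f ρ +
      circleAverage f 0 ρ) (Icc 0 r) := fun ρ hρ ↦
    ((continuous_mul_log_div r).continuousAt.mul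
      (hasDerivAt_circleAverageRadialDeriv hf (hball hρ)).continuousAt |>.add
      (hasDerivAt_circleAverage_radius hf (hball hρ)).continuousAt).continuousWithinAt
  have hderiv : ∀ ρ ∈ Ioo 0 r, HasDerivAt (fun ρ ↦ ρ * Real.log (r / ρ) *
      circleAverageRadialDeriv f ρ + circleAverage f 0 ρ)
      (ρ * Real.log (r / ρ) * circleAverage (lapl f) 0 ρ) ρ := by
    intro ρ hρ
    have hρR := hball (Ioo_subset_Icc_self hρ)
    refine (((hasDerivAt_mul_log_div (hρ.1.trans hρ.2).ne' hρ.1.ne').mul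
      (hasDerivAt_circleAverageRadialDeriv hf hρR)).add
      (hasDerivAt_circleAverage_radius hf hρR)).congr_deriv ?_
    linear_combination (-Real.log (r / ρ)) * mul_circleAverage_lapl hf hρR
  have hint :
      ContinuousOn (fun ρ ↦ ρ * Real.log (r / ρ) * circleAverage (lapl f) 0 ρ) (Icc 0 r) :=
    (continuous_mul_log_div r).continuousOn.mul <| ContinuousOn.circleAverage
      ((continuousOn_lapl_ball hf).mono fun z hz ↦ by simpa using hz.2.trans_lt hrR)
      fun ρ hρ ↦ hρ.1
  rw [intervalIntegral.integral_eq_sub_of_hasDerivAt_of_le hr hH hderiv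
    (hint.intervalIntegrable_of_Icc hr)]
  rcases hr.eq_or_lt with rfl | hr
  · simp
  · simp [div_self hr.ne']

theorem integral_ball_log_div_mul_lapl {r : ℝ} (hr : 0 ≤ r) (hrR : r < R) :
    ∫ ζ in ball (0 : ℂ) r, Real.log (r / ‖ζ‖) * lapl f ζ =
      2 * π * (circleAverage f 0 r - f 0) := by
  have hpolar : ContinuousOn (fun p : ℝ × ℝ ↦ p.1 • (Real.log (r / ‖circleMap 0 p.1 p.2‖) *
      lapl f (circleMap 0 p.1 p.2))) (Icc 0 r ×ˢ Icc (-π) π) := by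
    refine (((continuous_mul_log_div r).comp continuous_fst).continuousOn.mul
      ((continuousOn_lapl_ball hf).comp (circleMap.continuous (c := 0)).continuousOn
        fun p hp ↦ ?_)).congr fun p hp ↦ ?_
    · exact circleMap_mem_ball (by simpa [abs_of_nonneg hp.1.1] using hp.1.2.trans_lt hrR) p.2
    · simp [norm_circleMap_zero, abs_of_nonneg hp.1.1, mul_assoc]
  rw [integral_ball_eq_integral_smul_circleAverage
    (G := fun ζ ↦ Real.log (r / ‖ζ‖) * lapl f ζ) hr hpolar,
    ← integral_mul_log_mul_circleAverage_lapl hf hr hrR, smul_eq_mul]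
  refine congrArg _ (intervalIntegral.integral_congr fun ρ hρ ↦ ?_)
  rw [uIcc_of_le hr] at hρ
  rw [circleAverage_comp_norm_mul (fun x ↦ Real.log (r / x)), abs_of_nonneg hρ.1, smul_eq_mul]
  ring

end ContDiffOnBall

/-- Riesz/Jensen representation formula: for a `C²` function `f` on the unit disc and
`0 < r < 1`, `∫₀¹ f(r·e^{2πiθ}) dθ - f(0) = (1/2π) ∫_{|ζ|<r} log(r/|ζ|)·Δf(ζ) dA(ζ)`. -/
theorem stmt11 (f : ℂ → ℝ) (hf : ContDiffOn ℝ 2 f (Metric.ball 0 1))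
    (r : ℝ) (hr0 : 0 < r) (hr1 : r < 1) :
    (∫ θ in (0:ℝ)..1, f (r * Complex.exp (2 * Real.pi * Complex.I * θ))) - f 0 =
      (1 / (2 * Real.pi)) *
        ∫ ζ in Metric.ball (0 : ℂ) r, Real.log (r / ‖ζ‖) * lapl f ζ := by
  have hmean := circleAverage_eq_integral_exp f 0 r
  simp only [zero_add] at hmean
  rw [← hmean, integral_ball_log_div_mul_lapl hf hr0.le hr1]
  field_simp
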